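/- arXiv:2311.13748 — 9 statements merged into one kernel-verified Lean document; each statement's English description precedes it below -/
import Mathlib

section
/- For every real number x, the series ∑_{k=0}^∞ x^{2k} / (4^k (k!)²) converges and its sum equals (1/π) ∫_0^π exp(x cos θ) dθ. That is, the power-series and integral representations of the modified Bessel function of the first kind of order 0 agree. -/
open Real MeasureTheory

/-- The modified Bessel function of the first kind of order `0`, defined via its
integral representation `I₀(x) = (1/π) ∫_0^π exp(x cos θ) dθ`. -/
noncomputable def I0 (x : ℝ) : ℝ := (1 / π) * ∫ θ in (0:ℝ)..π, Real.exp (x * Real.cos θ)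

lemma integral_cos_pow_odd_pi (n : ℕ) :
    (∫ θ in (0:ℝ)..π, Real.cos θ ^ (2 * n + 1)) = 0 := by
  induction' n with k ih
  · simp
  · have h : 2 * (k + 1) + 1 = (2 * k + 1) + 2 := by ring
    rw [h, integral_cos_pow, ih]
    simp

lemma integral_cos_pow_even_pi (n : ℕ) :
    (∫ θ in (0:ℝ)..π, Real.cos θ ^ (2 * n))
      = π * (2 * n).factorial / (4 ^ n * ((n.factorial : ℝ)) ^ 2) := by
  induction' n with k ih
  · simp
  · have h : 2 * (k + 1) = (2 * k) + 2 := by ring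
    rw [h, integral_cos_pow, ih]
    have h1 : ((2 * k) + 2).factorial = ((2 * k) + 2) * ((2 * k + 1) * (2 * k).factorial) := by
      rw [Nat.factorial_succ, Nat.factorial_succ]
    have h2 : (k + 1).factorial = (k + 1) * k.factorial := Nat.factorial_succ k
    have hf : ((2 * k).factorial : ℝ) ≠ 0 := by positivity
    have hk : ((k.factorial : ℝ)) ≠ 0 := by positivity
    rw [h1, h2]
    push_cast
    field_simp
    rw [Real.sin_pi, Real.sin_zero]
    ring

/-- The power series `∑ x^{2k}/(4^k (k!)²)` converges with sum `I₀(x)`. -/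
theorem stmt_0 (x : ℝ) :
    HasSum (fun k : ℕ => x ^ (2 * k) / (4 ^ k * (Nat.factorial k : ℝ) ^ 2)) (I0 x) := by
  set μ := volume.restrict (Set.Ioc (0:ℝ) π) with hμ
  have hπ : (0:ℝ) ≤ π := pi_pos.le
  set F : ℕ → ℝ → ℝ := fun n θ => (x * Real.cos θ) ^ n / n.factorial with hF
  have hcont : ∀ n, Continuous (F n) := fun n => by
    simp only [hF]; fun_prop
  have hint : ∀ n, Integrable (F n) μ :=
    fun n => (hcont n).integrableOn_Ioc.integrable
  have hμuniv : μ Set.univ = ENNReal.ofReal π := by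
    rw [hμ, Measure.restrict_apply_univ, Real.volume_Ioc, sub_zero]
  have hnorm : Summable fun n => ∫ θ, ‖F n θ‖ ∂μ := by
    apply Summable.of_nonneg_of_le
      (fun n => integral_nonneg fun θ => norm_nonneg _)
      (fun n => ?_) ((Real.summable_pow_div_factorial |x|).mul_left π)
    have hle : ∀ θ, ‖F n θ‖ ≤ |x| ^ n / n.factorial := by
      intro θ
      simp only [hF, norm_div, norm_pow, Real.norm_eq_abs, abs_mul]
      rw [Nat.abs_cast]
      gcongr
      calc |x| * |Real.cos θ| ≤ |x| * 1 := by
            gcongr; exact abs_cos_le_one θ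
        _ = |x| := mul_one _
    calc (∫ θ, ‖F n θ‖ ∂μ) ≤ ∫ _θ, |x| ^ n / n.factorial ∂μ := by
          apply integral_mono (hint n).norm (integrable_const _) hle
      _ = (μ Set.univ).toReal * (|x| ^ n / n.factorial) := by
          rw [integral_const, smul_eq_mul]
          rfl
      _ = π * (|x| ^ n / n.factorial) := by
          rw [hμuniv, ENNReal.toReal_ofReal hπ]
  have key := MeasureTheory.hasSum_integral_of_summable_integral_norm hint hnorm
  have hexp : ∀ θ : ℝ, (∑' n, F n θ) = Real.exp (x * Real.cos θ) := by
    intro θ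
    rw [Real.exp_eq_exp_ℝ]
    exact (NormedSpace.expSeries_div_hasSum_exp (x * Real.cos θ)).tsum_eq
  have hI : I0 x = (1 / π) * ∫ θ, (∑' n, F n θ) ∂μ := by
    rw [I0, intervalIntegral.integral_of_le hπ]
    congr 1
    exact (integral_congr_ae (Filter.Eventually.of_forall fun θ => (hexp θ).symm))
  have key2 : HasSum (fun n => (1 / π) * ∫ θ, F n θ ∂μ) (I0 x) := by
    rw [hI]; exact key.mul_left _
  set g : ℕ → ℝ := fun n => (1 / π) * ∫ θ, F n θ ∂μ with hg
  have hFval : ∀ n, (∫ θ, F n θ ∂μ)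
      = x ^ n / n.factorial * ∫ θ in (0:ℝ)..π, Real.cos θ ^ n := by
    intro n
    rw [intervalIntegral.integral_of_le hπ, ← integral_const_mul]
    congr 1 with θ
    simp only [hF, mul_pow]
    ring
  have hgodd : ∀ k, g (2 * k + 1) = 0 := by
    intro k
    simp only [hg, hFval, integral_cos_pow_odd_pi, mul_zero, zero_mul]
  have hgeven : ∀ k, g (2 * k) = x ^ (2 * k) / (4 ^ k * (Nat.factorial k : ℝ) ^ 2) := by
    intro k
    have hπ' : (π : ℝ) ≠ 0 := pi_ne_zero
    have hf : ((2 * k).factorial : ℝ) ≠ 0 := by positivity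
    have hk : ((k.factorial : ℝ)) ≠ 0 := by positivity
    simp only [hg, hFval, integral_cos_pow_even_pi]
    field_simp
  have hinj : Function.Injective (fun k : ℕ => 2 * k) := fun a b h => by simpa using h
  have h0 : ∀ n, n ∉ Set.range (fun k : ℕ => 2 * k) → g n = 0 := by
    intro n hn
    rcases Nat.even_or_odd n with he | ho
    · obtain ⟨k, hk⟩ := he
      exact absurd ⟨k, by simp [hk]; ring⟩ hn
    · obtain ⟨k, hk⟩ := ho
      rw [hk]; exact hgodd k
  have hfinal := (Function.Injective.hasSum_iff hinj h0).mpr key2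
  have heq : (g ∘ fun k : ℕ => 2 * k)
      = fun k : ℕ => x ^ (2 * k) / (4 ^ k * (Nat.factorial k : ℝ) ^ 2) :=
    funext fun k => hgeven k
  rwa [heq] at hfinal
end

section
/- For every k ∈ ℕ, every y ∈ (0,1], and every x > 0, one has |I₀⁽ᵏ⁾(y·x)| ≤ (I₀(x))^y; equivalently, |I₀⁽ᵏ⁾(y·x) / I₀(x)|² ≤ π^{2−2y} (∫_0^π exp(x cos θ) dθ)^{−2(1−y)} = (I₀(x))^{−2(1−y)}. -/
open Real MeasureTheory

/-- `I₀⁽ᵏ⁾(x) = (1/π) ∫_0^π exp(x cos θ) (cos θ)^k dθ`. -/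
noncomputable def I0k (k : ℕ) (x : ℝ) : ℝ :=
  (1 / π) * ∫ θ in (0:ℝ)..π, Real.exp (x * Real.cos θ) * Real.cos θ ^ k

lemma Jcont (x : ℝ) : Continuous fun θ : ℝ => Real.exp (x * Real.cos θ) := by
  continuity

lemma Jpos (x : ℝ) : 0 < ∫ θ in (0:ℝ)..π, Real.exp (x * Real.cos θ) := by
  apply intervalIntegral.intervalIntegral_pos_of_pos_on
  · exact (Jcont x).intervalIntegrable 0 π
  · intro t _; positivity
  · exact pi_pos

lemma I0pos (x : ℝ) : 0 < I0 x := by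
  have := Jpos x
  have := pi_pos
  unfold I0; positivity

lemma abs_I0k_le (k : ℕ) (x : ℝ) : |I0k k x| ≤ I0 x := by
  unfold I0k I0
  rw [abs_mul]
  have hπ : (0:ℝ) < 1 / π := by positivity
  rw [abs_of_pos hπ]
  apply mul_le_mul_of_nonneg_left _ hπ.le
  calc |∫ θ in (0:ℝ)..π, Real.exp (x * Real.cos θ) * Real.cos θ ^ k|
      ≤ ∫ θ in (0:ℝ)..π, |Real.exp (x * Real.cos θ) * Real.cos θ ^ k| :=
        intervalIntegral.abs_integral_le_integral_abs pi_nonneg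
    _ ≤ ∫ θ in (0:ℝ)..π, Real.exp (x * Real.cos θ) := by
        apply intervalIntegral.integral_mono_on pi_nonneg
        · exact ((Jcont x).mul (by continuity)).abs.intervalIntegrable 0 π
        · exact (Jcont x).intervalIntegrable 0 π
        · intro t _
          rw [abs_mul, abs_of_pos (Real.exp_pos _), abs_pow]
          nth_rewrite 2 [show Real.exp (x * Real.cos t) = Real.exp (x * Real.cos t) * 1 by ring]
          apply mul_le_mul_of_nonneg_left _ (Real.exp_pos _).le
          exact pow_le_one₀ (abs_nonneg _) (abs_cos_le_one t)

lemma I0_mul_le (y x : ℝ) (hy0 : 0 < y) (hy1 : y ≤ 1) : I0 (y * x) ≤ I0 x ^ y := by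
  rcases eq_or_lt_of_le hy1 with h1 | h1
  · rw [h1, one_mul, Real.rpow_one]
  -- Hölder with p = 1/y, q = 1/(1-y)
  have hpq : (1 / y).HolderConjugate (1 / (1 - y)) := by
    rw [Real.holderConjugate_iff]
    constructor
    · rw [lt_div_iff₀ hy0]; linarith
    · field_simp
      ring
  set μ := volume.restrict (Set.Ioc (0:ℝ) π) with hμ
  have hfin : IsFiniteMeasure μ := by
    constructor
    rw [hμ, Measure.restrict_apply_univ]
    exact measure_Ioc_lt_top
  have hmem : ∀ (z : ℝ) (p : ENNReal),
      MemLp (fun θ : ℝ => Real.exp (z * Real.cos θ)) p μ := by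
    intro z p
    apply MemLp.of_bound ((Jcont z).aestronglyMeasurable) (Real.exp |z|)
    filter_upwards with θ
    rw [Real.norm_eq_abs, abs_of_pos (Real.exp_pos _)]
    apply Real.exp_le_exp.mpr
    calc z * Real.cos θ ≤ |z * Real.cos θ| := le_abs_self _
      _ = |z| * |Real.cos θ| := abs_mul _ _
      _ ≤ |z| * 1 := mul_le_mul_of_nonneg_left (abs_cos_le_one θ) (abs_nonneg _)
      _ = |z| := mul_one _
  have key := integral_mul_le_Lp_mul_Lq_of_nonneg (μ := μ) hpq
    (f := fun θ => Real.exp (y * x * Real.cos θ)) (g := fun _ => (1:ℝ))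
    (Filter.Eventually.of_forall fun θ => (Real.exp_pos _).le)
    (Filter.Eventually.of_forall fun θ => zero_le_one)
    (hmem (y * x) _) (MemLp.of_bound aestronglyMeasurable_const 1 (by simp))
  simp only [mul_one] at key
  have hrw1 : ∀ θ : ℝ, Real.exp (y * x * Real.cos θ) ^ (1 / y) = Real.exp (x * Real.cos θ) := by
    intro θ
    rw [← Real.exp_mul]
    congr 1
    field_simp
  have hrw2 : (fun θ : ℝ => Real.exp (y * x * Real.cos θ) ^ (1 / y))
      = fun θ : ℝ => Real.exp (x * Real.cos θ) := funext hrw1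
  rw [hrw2] at key
  have hone : (∫ _ : ℝ, (1:ℝ) ^ (1/(1-y)) ∂μ) = π := by
    rw [hμ]
    simp [Real.volume_Ioc, ENNReal.toReal_ofReal pi_nonneg, pi_nonneg]
  rw [hone] at key
  have hJ : ∀ z : ℝ, (∫ θ in (0:ℝ)..π, Real.exp (z * Real.cos θ)) = ∫ θ, Real.exp (z * Real.cos θ) ∂μ := by
    intro z
    rw [hμ, intervalIntegral.integral_of_le pi_nonneg]
  have hJx := Jpos x
  have hJyx := Jpos (y * x)
  set J : ℝ := ∫ θ in (0:ℝ)..π, Real.exp (x * Real.cos θ) with hJdef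
  have key2 : (∫ θ in (0:ℝ)..π, Real.exp (y * x * Real.cos θ))
      ≤ J ^ y * π ^ (1 - y) := by
    rw [hJ (y*x), hJdef, hJ x]
    have h1y : (1:ℝ) / (1 / y) = y := one_div_one_div y
    have h2y : (1:ℝ) / (1 / (1 - y)) = 1 - y := one_div_one_div (1 - y)
    rw [h1y, h2y] at key
    exact key
  unfold I0
  rw [← hJdef]
  have hπ : (0:ℝ) < π := pi_pos
  calc (1 / π) * ∫ θ in (0:ℝ)..π, Real.exp (y * x * Real.cos θ)
      ≤ (1 / π) * (J ^ y * π ^ (1 - y)) := by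
        apply mul_le_mul_of_nonneg_left key2 (by positivity)
    _ = (1 / π * J) ^ y := by
        rw [Real.mul_rpow (by positivity) hJx.le, Real.rpow_sub hπ, Real.rpow_one,
          Real.div_rpow zero_le_one hπ.le, Real.one_rpow]
        field_simp

theorem stmt_2 (k : ℕ) (y x : ℝ) (hy0 : 0 < y) (hy1 : y ≤ 1) (hx : 0 < x) :
    |I0k k (y * x)| ≤ I0 x ^ y ∧
    |I0k k (y * x) / I0 x| ^ 2
        ≤ π ^ (2 - 2 * y)
            * (∫ θ in (0:ℝ)..π, Real.exp (x * Real.cos θ)) ^ (-(2 * (1 - y))) ∧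
    π ^ (2 - 2 * y) * (∫ θ in (0:ℝ)..π, Real.exp (x * Real.cos θ)) ^ (-(2 * (1 - y)))
        = I0 x ^ (-(2 * (1 - y))) := by
  have h1 : |I0k k (y * x)| ≤ I0 x ^ y :=
    (abs_I0k_le k (y * x)).trans (I0_mul_le y x hy0 hy1)
  have hI0 := I0pos x
  have hJ := Jpos x
  have hπ := pi_pos
  have h3 : π ^ (2 - 2 * y) * (∫ θ in (0:ℝ)..π, Real.exp (x * Real.cos θ)) ^ (-(2 * (1 - y)))
      = I0 x ^ (-(2 * (1 - y))) := by
    unfold I0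
    rw [Real.mul_rpow (by positivity) hJ.le, Real.div_rpow zero_le_one hπ.le, Real.one_rpow,
      one_div, ← Real.rpow_neg hπ.le]
    congr 2
    ring
  refine ⟨h1, ?_, h3⟩
  rw [h3]
  have h2 : |I0k k (y * x) / I0 x| ^ 2 ≤ I0 x ^ (-(2 * (1 - y))) := by
    rw [abs_div, abs_of_pos hI0, div_pow]
    rw [div_le_iff₀ (by positivity)]
    calc |I0k k (y * x)| ^ 2 ≤ (I0 x ^ y) ^ 2 := by
          apply pow_le_pow_left₀ (abs_nonneg _) h1
      _ = I0 x ^ (-(2 * (1 - y))) * I0 x ^ 2 := by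
          rw [← Real.rpow_natCast (I0 x ^ y) 2, ← Real.rpow_natCast (I0 x) 2,
            ← Real.rpow_mul hI0.le, ← Real.rpow_add hI0]
          congr 1
          push_cast
          ring
  exact h2
end

section
/- For every x ≥ 0, one has I₀(x) = (1/π) ∫_0^π exp(x cos θ) dθ ≥ (1/3) exp(x/2). -/
open Real MeasureTheory

theorem stmt_4 (x : ℝ) (hx : 0 ≤ x) : (1 / 3) * Real.exp (x / 2) ≤ I0 x := by
  have hπ := Real.pi_pos
  have hcont : Continuous (fun θ : ℝ => Real.exp (x * Real.cos θ)) := by continuity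
  have hint : ∀ a b : ℝ, IntervalIntegrable (fun θ : ℝ => Real.exp (x * Real.cos θ))
      MeasureTheory.volume a b := fun a b => hcont.intervalIntegrable a b
  have h3le : π / 3 ≤ π := by linarith
  have h1 : ∫ θ in (0:ℝ)..(π/3), Real.exp (x/2) ≤
      ∫ θ in (0:ℝ)..(π/3), Real.exp (x * Real.cos θ) := by
    apply intervalIntegral.integral_mono_on (by positivity)
      (intervalIntegrable_const) (hint 0 (π/3))
    intro θ hθ
    apply Real.exp_le_exp.mpr
    have hc : (1/2:ℝ) ≤ Real.cos θ := by
      have := Real.cos_le_cos_of_nonneg_of_le_pi hθ.1 h3le hθ.2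
      rwa [Real.cos_pi_div_three] at this
    nlinarith
  have h2 : ∫ θ in (0:ℝ)..(π/3), Real.exp (x * Real.cos θ) ≤
      ∫ θ in (0:ℝ)..π, Real.exp (x * Real.cos θ) := by
    rw [← intervalIntegral.integral_add_adjacent_intervals (hint 0 (π/3)) (hint (π/3) π)]
    have : 0 ≤ ∫ θ in (π/3)..π, Real.exp (x * Real.cos θ) := by
      apply intervalIntegral.integral_nonneg h3le
      intro u _; positivity
    linarith
  have hconst : ∫ θ in (0:ℝ)..(π/3), Real.exp (x/2) = (π/3) * Real.exp (x/2) := by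
    simp [intervalIntegral.integral_const]
  rw [I0]
  rw [hconst] at h1
  calc (1/3:ℝ) * Real.exp (x/2) = (1/π) * (π/3 * Real.exp (x/2)) := by
        field_simp
    _ ≤ (1/π) * ∫ θ in (0:ℝ)..π, Real.exp (x * Real.cos θ) :=
        mul_le_mul_of_nonneg_left (h1.trans h2) (by positivity)
end

section
/- Let R > 0, let M ∈ [0, R) and N ≥ 0, and let y ∈ [0,1]. Then for all real numbers t, s with |t| ≤ M and |s| ≤ N, setting η := R + t, the quadratic form of the matrix A := [[yη², −y²ηs],[−y²ηs, y(1+y²s²)]] satisfies, for every (v₁, v₂) ∈ ℝ²: (i) the factorization yη²v₁² − 2y²ηs v₁v₂ + y(1+y²s²)v₂² = y(ηv₁ − ys v₂)² + y v₂², and (ii) the coercivity bound y(ηv₁ − ys v₂)² + y v₂² ≥ 𝔩 · y · (v₁² + v₂²), where 𝔩 := min{ 1/2, (R − M)² / (1 + 2N²) }. -/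
theorem stmt_6 (R M N y t s : ℝ) (hR : 0 < R) (hM0 : 0 ≤ M) (hMR : M < R)
    (hN : 0 ≤ N) (hy0 : 0 ≤ y) (hy1 : y ≤ 1) (ht : |t| ≤ M) (hs : |s| ≤ N)
    (v₁ v₂ : ℝ) :
    (y * (R + t) ^ 2 * v₁ ^ 2 - 2 * y ^ 2 * (R + t) * s * v₁ * v₂
          + y * (1 + y ^ 2 * s ^ 2) * v₂ ^ 2
        = y * ((R + t) * v₁ - y * s * v₂) ^ 2 + y * v₂ ^ 2) ∧
      min (1 / 2) ((R - M) ^ 2 / (1 + 2 * N ^ 2)) * y * (v₁ ^ 2 + v₂ ^ 2)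
        ≤ y * ((R + t) * v₁ - y * s * v₂) ^ 2 + y * v₂ ^ 2 := by
  refine ⟨by ring, ?_⟩
  obtain ⟨a, ha⟩ : ∃ a, a = (R + t) * v₁ - y * s * v₂ := ⟨_, rfl⟩
  obtain ⟨ℓ, hℓdef⟩ : ∃ ℓ, ℓ = min (1 / 2) ((R - M) ^ 2 / (1 + 2 * N ^ 2)) := ⟨_, rfl⟩
  rw [← ha, ← hℓdef]
  have hden : (0:ℝ) < 1 + 2 * N ^ 2 := by positivity
  have hℓ1 : ℓ ≤ 1 / 2 := hℓdef ▸ min_le_left _ _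
  have hℓ0 : 0 ≤ ℓ := hℓdef ▸ le_min (by norm_num) (by positivity)
  have hℓ2 : ℓ * (1 + 2 * N ^ 2) ≤ (R - M) ^ 2 := by
    have hm : ℓ ≤ (R - M) ^ 2 / (1 + 2 * N ^ 2) := hℓdef ▸ min_le_right _ _
    calc ℓ * (1 + 2 * N ^ 2) ≤ (R - M) ^ 2 / (1 + 2 * N ^ 2) * (1 + 2 * N ^ 2) :=
          mul_le_mul_of_nonneg_right hm hden.le
      _ = (R - M) ^ 2 := div_mul_cancel₀ _ hden.ne'
  have ht1 : -M ≤ t := neg_le_of_abs_le ht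
  have hη : R - M ≤ R + t := by linarith
  have hb : (y * s) ^ 2 ≤ N ^ 2 := by
    have h1 : |y * s| ≤ N := by
      rw [abs_mul, abs_of_nonneg hy0]
      calc y * |s| ≤ 1 * N := mul_le_mul hy1 hs (abs_nonneg s) (by norm_num)
        _ = N := one_mul N
    calc (y*s)^2 = |y*s|^2 := (sq_abs _).symm
      _ ≤ N ^ 2 := by nlinarith [abs_nonneg (y*s)]
  -- key: (η v₁)² ≤ (1+2N²)(a² + v₂²/2)
  have hkey : ((R + t) * v₁) ^ 2 ≤ (1 + 2 * N ^ 2) * (a ^ 2 + v₂ ^ 2 / 2) := by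
    have hexp : (R + t) * v₁ = a + (y * s) * v₂ := by rw [ha]; ring
    rw [hexp]
    nlinarith [sq_nonneg (2 * (y * s) * a - v₂),
      mul_le_mul_of_nonneg_right hb (sq_nonneg a),
      mul_le_mul_of_nonneg_right hb (sq_nonneg v₂)]
  have hv1 : ℓ * v₁ ^ 2 ≤ a ^ 2 + v₂ ^ 2 / 2 := by
    have hsq : (R - M) ^ 2 ≤ (R + t) ^ 2 := by nlinarith
    have h1 : (R - M) ^ 2 * v₁ ^ 2 ≤ ((R + t) * v₁) ^ 2 := by
      calc (R - M) ^ 2 * v₁ ^ 2 ≤ (R + t) ^ 2 * v₁ ^ 2 :=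
            mul_le_mul_of_nonneg_right hsq (sq_nonneg v₁)
        _ = ((R + t) * v₁) ^ 2 := by ring
    have h2 : ℓ * (1 + 2 * N ^ 2) * v₁ ^ 2 ≤ (1 + 2 * N ^ 2) * (a ^ 2 + v₂ ^ 2 / 2) :=
      le_trans (mul_le_mul_of_nonneg_right hℓ2 (sq_nonneg v₁)) (le_trans h1 hkey)
    have h3 : (1 + 2 * N ^ 2) * (ℓ * v₁ ^ 2) ≤ (1 + 2 * N ^ 2) * (a ^ 2 + v₂ ^ 2 / 2) := by
      calc (1 + 2 * N ^ 2) * (ℓ * v₁ ^ 2) = ℓ * (1 + 2 * N ^ 2) * v₁ ^ 2 := by ring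
        _ ≤ _ := h2
    exact le_of_mul_le_mul_left h3 hden
  have hv2 : ℓ * v₂ ^ 2 ≤ v₂ ^ 2 / 2 := by nlinarith [sq_nonneg v₂]
  have hsum : ℓ * (v₁ ^ 2 + v₂ ^ 2) ≤ a ^ 2 + v₂ ^ 2 := by nlinarith
  calc ℓ * y * (v₁ ^ 2 + v₂ ^ 2) = y * (ℓ * (v₁ ^ 2 + v₂ ^ 2)) := by ring
    _ ≤ y * (a ^ 2 + v₂ ^ 2) := mul_le_mul_of_nonneg_left hsum hy0
    _ = y * a ^ 2 + y * v₂ ^ 2 := by ring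
end

section
/- Fix R > 0 and g > 0. Let η : ℝ × ℝ → ℝ (variables (t,z)) be C² with η(t,z) > 0 everywhere, and let Ψ : ℝ × ℝ × ℝ → ℝ (variables (t,z,r)) be C². Define ψ(t,z) := Ψ(t,z,η(t,z)), G(t,z) := ∂_rΨ(t,z,η(t,z)) − ∂_zη(t,z)·∂_zΨ(t,z,η(t,z)), and 𝓗(η)(t,z) := ∂_z( ∂_zη / (2√(1+(∂_zη)²)) )(t,z) − 1/(2η(t,z)√(1+(∂_zη(t,z))²)). Assume: (E) ∂_z(r ∂_zΨ)(t,z,r) + ∂_r(r ∂_rΨ)(t,z,r) = 0 for all t, z and all 0 < r ≤ η(t,z); (N) ∂_rΨ(t,z,0) = 0 for all t, z; (K) ∂_tη(t,z) = G(t,z) for all t, z; (D) ∂_tψ + ½(∂_zψ)² − (∂_zη·∂_zψ + G)² / (2(1+(∂_zη)²)) − 𝓗(η) − 1/(2R) = 0 for all t, z. Define η^g(t,z) := η(t, z − gt²/2), Ψ^g(t,z,r) := Ψ(t, z − gt²/2, r) + g t z − g² t³/6, ψ^g(t,z) := Ψ^g(t,z,η^g(t,z)), and G^g(t,z) := ∂_rΨ^g(t,z,η^g(t,z))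 − ∂_zη^g(t,z)·∂_zΨ^g(t,z,η^g(t,z)). Then (η^g, Ψ^g) satisfies (E) for 0 < r ≤ η^g(t,z), (N), the kinematic equation ∂_tη^g = G^g, and the dynamic equation with gravity: ∂_tψ^g + ½(∂_zψ^g)² − (∂_zη^g·∂_zψ^g + G^g)² / (2(1+(∂_zη^g)²)) − 𝓗(η^g) − 1/(2R) − g z = 0 for all t, z. -/
noncomputable section
namespace JetAux

/-- directional derivative lemma: first variable -/
lemma dir1 {F : ℝ × ℝ → ℝ} (hF : Differentiable ℝ F) (t w : ℝ) :
    HasDerivAt (fun u => F (u, w)) (fderiv ℝ F (t, w) (1, 0)) t := by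
  have hp : HasDerivAt (fun u : ℝ => (u, w)) ((1 : ℝ), (0 : ℝ)) t :=
    (hasDerivAt_id t).prodMk (hasDerivAt_const t w)
  exact (hF (t, w)).hasFDerivAt.comp_hasDerivAt t hp

lemma dir2 {F : ℝ × ℝ → ℝ} (hF : Differentiable ℝ F) (t w : ℝ) :
    HasDerivAt (fun v => F (t, v)) (fderiv ℝ F (t, w) (0, 1)) w := by
  have hp : HasDerivAt (fun v : ℝ => (t, v)) ((0 : ℝ), (1 : ℝ)) w :=
    (hasDerivAt_const w t).prodMk (hasDerivAt_id w)
  exact (hF (t, w)).hasFDerivAt.comp_hasDerivAt w hp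

/-- the parabolic path has derivative -/
lemma pathDeriv (g t z : ℝ) :
    HasDerivAt (fun u : ℝ => (u, z - g * u ^ 2 / 2)) ((1 : ℝ), -(g * t)) t := by
  have h1 : HasDerivAt (fun u : ℝ => u ^ 2) (2 * t) t := by
    simpa using hasDerivAt_pow 2 t
  have h2 : HasDerivAt (fun u : ℝ => g * u ^ 2 / 2) (g * (2 * t) / 2) t :=
    (h1.const_mul g).div_const 2
  have h3 : HasDerivAt (fun u : ℝ => z - g * u ^ 2 / 2) (-(g * (2 * t) / 2)) t :=
    h2.const_sub z
  rw [show -(g * (2 * t) / 2) = -(g * t) by ring] at h3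
  exact (hasDerivAt_id t).prodMk h3

/-- chain rule along the parabolic path -/
lemma chain2 {F : ℝ × ℝ → ℝ} (hF : Differentiable ℝ F) (g t z : ℝ) :
    HasDerivAt (fun u => F (u, z - g * u ^ 2 / 2))
      (deriv (fun u => F (u, z - g * t ^ 2 / 2)) t
        - g * t * deriv (fun v => F (t, v)) (z - g * t ^ 2 / 2)) t := by
  set s := z - g * t ^ 2 / 2 with hs
  have h := (hF (t, s)).hasFDerivAt.comp_hasDerivAt t (pathDeriv g t z)
  have hdec : fderiv ℝ F (t, s) ((1 : ℝ), -(g * t))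
      = fderiv ℝ F (t, s) (1, 0) - g * t * fderiv ℝ F (t, s) (0, 1) := by
    have : ((1 : ℝ), -(g * t)) = ((1 : ℝ), (0 : ℝ)) + (-(g * t)) • ((0 : ℝ), (1 : ℝ)) := by
      simp [Prod.ext_iff]
    rw [this, map_add, map_smul, smul_eq_mul]; ring
  rw [hdec] at h
  rw [(dir1 hF t s).deriv, (dir2 hF t s).deriv]
  exact h

end JetAux
end



noncomputable section

/-- Partial derivative in the first variable of a function of two real variables. -/
def pt2 (f : ℝ → ℝ → ℝ) (t z : ℝ) : ℝ := deriv (fun s => f s z) t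

/-- Partial derivative in the second variable of a function of two real variables. -/
def pz2 (f : ℝ → ℝ → ℝ) (t z : ℝ) : ℝ := deriv (fun w => f t w) z

/-- Partial derivative in the second variable of a function of three real variables. -/
def pz3 (f : ℝ → ℝ → ℝ → ℝ) (t z r : ℝ) : ℝ := deriv (fun w => f t w r) z

/-- Partial derivative in the third variable of a function of three real variables. -/
def pr3 (f : ℝ → ℝ → ℝ → ℝ) (t z r : ℝ) : ℝ := deriv (fun w => f t z w) r

/-- The cylindrical operator `∂_z(r ∂_z Ψ) + ∂_r(r ∂_r Ψ)`. -/
def cylOp (Ψ : ℝ → ℝ → ℝ → ℝ) (t z r : ℝ) : ℝ :=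
  pz3 (fun t' z' r' => r' * pz3 Ψ t' z' r') t z r
    + pr3 (fun t' z' r' => r' * pr3 Ψ t' z' r') t z r

/-- Mean curvature `𝓗(η)` of the surface of revolution `r = η(t,z)`. -/
def meanCurv (η : ℝ → ℝ → ℝ) (t z : ℝ) : ℝ :=
  pz2 (fun t' z' => pz2 η t' z' / (2 * Real.sqrt (1 + pz2 η t' z' ^ 2))) t z
    - 1 / (2 * η t z * Real.sqrt (1 + pz2 η t z ^ 2))

/-- The Dirichlet–Neumann expression `G = (∂_rΨ − ∂_zη ∂_zΨ)|_{r = η(t,z)}`. -/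
def DNexpr (η : ℝ → ℝ → ℝ) (Ψ : ℝ → ℝ → ℝ → ℝ) (t z : ℝ) : ℝ :=
  pr3 Ψ t z (η t z) - pz2 η t z * pz3 Ψ t z (η t z)

/-- The trace `ψ(t,z) = Ψ(t,z,η(t,z))` of the potential on the free surface. -/
def surfTrace (η : ℝ → ℝ → ℝ) (Ψ : ℝ → ℝ → ℝ → ℝ) : ℝ → ℝ → ℝ :=
  fun t z => Ψ t z (η t z)

/-- Galilean shift of the free surface: `η^g(t,z) = η(t, z − gt²/2)`. -/
def shiftEta (g : ℝ) (η : ℝ → ℝ → ℝ) : ℝ → ℝ → ℝ :=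
  fun t z => η t (z - g * t ^ 2 / 2)

/-- Galilean shift of the potential: `Ψ^g(t,z,r) = Ψ(t, z − gt²/2, r) + gtz − g²t³/6`. -/
def shiftPsi (g : ℝ) (Ψ : ℝ → ℝ → ℝ → ℝ) : ℝ → ℝ → ℝ → ℝ :=
  fun t z r => Ψ t (z - g * t ^ 2 / 2) r + g * t * z - g ^ 2 * t ^ 3 / 6

end

theorem stmt_8 (R g : ℝ) (hR : 0 < R) (hg : 0 < g)
    (η : ℝ → ℝ → ℝ) (Ψ : ℝ → ℝ → ℝ → ℝ)
    (hη : ContDiff ℝ 2 (fun p : ℝ × ℝ => η p.1 p.2))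
    (hηpos : ∀ t z, 0 < η t z)
    (hΨ : ContDiff ℝ 2 (fun p : ℝ × ℝ × ℝ => Ψ p.1 p.2.1 p.2.2))
    (hE : ∀ t z r, 0 < r → r ≤ η t z → cylOp Ψ t z r = 0)
    (hN : ∀ t z, pr3 Ψ t z 0 = 0)
    (hK : ∀ t z, pt2 η t z = DNexpr η Ψ t z)
    (hD : ∀ t z,
      pt2 (surfTrace η Ψ) t z + pz2 (surfTrace η Ψ) t z ^ 2 / 2
          - (pz2 η t z * pz2 (surfTrace η Ψ) t z + DNexpr η Ψ t z) ^ 2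
              / (2 * (1 + pz2 η t z ^ 2))
          - meanCurv η t z - 1 / (2 * R) = 0) :
    (∀ t z r, 0 < r → r ≤ shiftEta g η t z → cylOp (shiftPsi g Ψ) t z r = 0) ∧
      (∀ t z, pr3 (shiftPsi g Ψ) t z 0 = 0) ∧
      (∀ t z, pt2 (shiftEta g η) t z = DNexpr (shiftEta g η) (shiftPsi g Ψ) t z) ∧
      (∀ t z,
        pt2 (surfTrace (shiftEta g η) (shiftPsi g Ψ)) t z
            + pz2 (surfTrace (shiftEta g η) (shiftPsi g Ψ)) t z ^ 2 / 2
            - (pz2 (shiftEta g η) t z * pz2 (surfTrace (shiftEta g η) (shiftPsi g Ψ)) t z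
                  + DNexpr (shiftEta g η) (shiftPsi g Ψ) t z) ^ 2
                / (2 * (1 + pz2 (shiftEta g η) t z ^ 2))
            - meanCurv (shiftEta g η) t z - 1 / (2 * R) - g * z = 0) := by
  have hFd : Differentiable ℝ (fun p : ℝ × ℝ => η p.1 p.2) := hη.differentiable (by norm_num)
  have hΦd : Differentiable ℝ (fun p : ℝ × ℝ × ℝ => Ψ p.1 p.2.1 p.2.2) :=
    hΨ.differentiable (by norm_num)
  have hzΨ : ∀ t r : ℝ, Differentiable ℝ (fun v => Ψ t v r) := by
    intro t r
    have h : Differentiable ℝ (fun v : ℝ => (t, v, r)) := by fun_prop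
    exact hΦd.comp h
  have hψd : Differentiable ℝ (fun p : ℝ × ℝ => Ψ p.1 p.2 (η p.1 p.2)) := by
    have h : Differentiable ℝ (fun p : ℝ × ℝ => (p.1, p.2, η p.1 p.2)) :=
      differentiable_fst.prodMk (differentiable_snd.prodMk hFd)
    exact hΦd.comp h
  have hψz : ∀ t : ℝ, Differentiable ℝ (fun w => Ψ t w (η t w)) := by
    intro t
    have h : Differentiable ℝ (fun w : ℝ => ((t, w) : ℝ × ℝ)) := by fun_prop
    exact hψd.comp h
  -- key pointwise identities for shifted derivatives
  have hpz3 : ∀ t z r : ℝ,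
      pz3 (shiftPsi g Ψ) t z r = pz3 Ψ t (z - g * t ^ 2 / 2) r + g * t := by
    intro t z r
    have h1 : HasDerivAt (fun v => Ψ t v r) (pz3 Ψ t (z - g * t ^ 2 / 2) r)
        (z - g * t ^ 2 / 2) := ((hzΨ t r) _).hasDerivAt
    have hsub : HasDerivAt (fun v : ℝ => v - g * t ^ 2 / 2) 1 z :=
      (hasDerivAt_id z).sub_const _
    have h2 := h1.comp z hsub
    have h3 : HasDerivAt (fun v : ℝ => g * t * v) (g * t) z := by
      simpa using (hasDerivAt_id z).const_mul (g * t)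
    have h4 := (h2.add h3).sub_const (g ^ 2 * t ^ 3 / 6)
    have h5 := h4.deriv
    rw [mul_one] at h5
    exact h5
  have hpr3 : ∀ t z r : ℝ,
      pr3 (shiftPsi g Ψ) t z r = pr3 Ψ t (z - g * t ^ 2 / 2) r := by
    intro t z r
    show deriv (fun w => Ψ t (z - g * t ^ 2 / 2) w + g * t * z - g ^ 2 * t ^ 3 / 6) r = _
    rw [deriv_sub_const, deriv_add_const]
    rfl
  have hEz : ∀ t z : ℝ, pz2 (shiftEta g η) t z = pz2 η t (z - g * t ^ 2 / 2) := by
    intro t z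
    show deriv (fun w => η t (w - g * t ^ 2 / 2)) z = _
    exact deriv_comp_sub_const (fun w => η t w) _ _
  have hDN : ∀ t z : ℝ,
      DNexpr (shiftEta g η) (shiftPsi g Ψ) t z
        = DNexpr η Ψ t (z - g * t ^ 2 / 2) - g * t * pz2 η t (z - g * t ^ 2 / 2) := by
    intro t z
    have he : shiftEta g η t z = η t (z - g * t ^ 2 / 2) := rfl
    unfold DNexpr
    rw [he, hpr3, hpz3, hEz]
    ring
  have hMC : ∀ t z : ℝ,
      meanCurv (shiftEta g η) t z = meanCurv η t (z - g * t ^ 2 / 2) := by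
    intro t z
    unfold meanCurv
    have h1 : pz2 (fun t' z' => pz2 (shiftEta g η) t' z'
          / (2 * Real.sqrt (1 + pz2 (shiftEta g η) t' z' ^ 2))) t z
        = pz2 (fun t' z' => pz2 η t' z' / (2 * Real.sqrt (1 + pz2 η t' z' ^ 2))) t
            (z - g * t ^ 2 / 2) := by
      show deriv (fun w => pz2 (shiftEta g η) t w
          / (2 * Real.sqrt (1 + pz2 (shiftEta g η) t w ^ 2))) z = _
      have hfun : (fun w => pz2 (shiftEta g η) t w
            / (2 * Real.sqrt (1 + pz2 (shiftEta g η) t w ^ 2)))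
          = fun w => (fun v => pz2 η t v / (2 * Real.sqrt (1 + pz2 η t v ^ 2)))
              (w - g * t ^ 2 / 2) := by
        funext w
        simp only [hEz]
      rw [hfun, deriv_comp_sub_const
        (fun v => pz2 η t v / (2 * Real.sqrt (1 + pz2 η t v ^ 2))) (g * t ^ 2 / 2) z]
      rfl
    rw [h1, hEz, show shiftEta g η t z = η t (z - g * t ^ 2 / 2) from rfl]
  refine ⟨?_, ?_, ?_, ?_⟩
  · -- elliptic equation
    intro t z r hr0 hrle
    have key : cylOp (shiftPsi g Ψ) t z r = cylOp Ψ t (z - g * t ^ 2 / 2) r := by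
      unfold cylOp
      have e1 : pz3 (fun t' z' r' => r' * pz3 (shiftPsi g Ψ) t' z' r') t z r
          = pz3 (fun t' z' r' => r' * pz3 Ψ t' z' r') t (z - g * t ^ 2 / 2) r := by
        show deriv (fun w => r * pz3 (shiftPsi g Ψ) t w r) z
            = deriv (fun w => r * pz3 Ψ t w r) (z - g * t ^ 2 / 2)
        have hfun : (fun w => r * pz3 (shiftPsi g Ψ) t w r)
            = fun w => r * (pz3 Ψ t (w - g * t ^ 2 / 2) r + g * t) := by
          funext w
          rw [hpz3]
        rw [hfun, deriv_const_mul_field, deriv_const_mul_field, deriv_add_const,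
          deriv_comp_sub_const (fun v => pz3 Ψ t v r) _ _]
      have e2 : pr3 (fun t' z' r' => r' * pr3 (shiftPsi g Ψ) t' z' r') t z r
          = pr3 (fun t' z' r' => r' * pr3 Ψ t' z' r') t (z - g * t ^ 2 / 2) r := by
        show deriv (fun w => w * pr3 (shiftPsi g Ψ) t z w) r
            = deriv (fun w => w * pr3 Ψ t (z - g * t ^ 2 / 2) w) r
        have hfun : (fun w => w * pr3 (shiftPsi g Ψ) t z w)
            = fun w => w * pr3 Ψ t (z - g * t ^ 2 / 2) w := by
          funext w
          rw [hpr3]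
        rw [hfun]
      rw [e1, e2]
    rw [key]
    exact hE t (z - g * t ^ 2 / 2) r hr0 hrle
  · -- Neumann at the axis
    intro t z
    rw [hpr3]
    exact hN t (z - g * t ^ 2 / 2)
  · -- kinematic equation
    intro t z
    have hpt : pt2 (shiftEta g η) t z
        = pt2 η t (z - g * t ^ 2 / 2) - g * t * pz2 η t (z - g * t ^ 2 / 2) :=
      (JetAux.chain2 hFd g t z).deriv
    rw [hpt, hDN, hK t (z - g * t ^ 2 / 2)]
  · -- dynamic equation with gravity
    intro t z
    set s := z - g * t ^ 2 / 2 with hs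
    -- derivative of the shifted trace in z
    have hb : pz2 (surfTrace (shiftEta g η) (shiftPsi g Ψ)) t z
        = pz2 (surfTrace η Ψ) t s + g * t := by
      have h1 : HasDerivAt (fun v => Ψ t v (η t v)) (pz2 (surfTrace η Ψ) t s) s :=
        ((hψz t) s).hasDerivAt
      have hsub : HasDerivAt (fun v : ℝ => v - g * t ^ 2 / 2) 1 z :=
        (hasDerivAt_id z).sub_const _
      have h2 := h1.comp z hsub
      have h3 : HasDerivAt (fun v : ℝ => g * t * v) (g * t) z := by
        simpa using (hasDerivAt_id z).const_mul (g * t)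
      have h4 := (h2.add h3).sub_const (g ^ 2 * t ^ 3 / 6)
      have h5 := h4.deriv
      rw [mul_one] at h5
      exact h5
    -- derivative of the shifted trace in t
    have ha : pt2 (surfTrace (shiftEta g η) (shiftPsi g Ψ)) t z
        = pt2 (surfTrace η Ψ) t s - g * t * pz2 (surfTrace η Ψ) t s
            + g * z - g ^ 2 * t ^ 2 / 2 := by
      have hch := JetAux.chain2 hψd g t z
      have hlin : HasDerivAt (fun u : ℝ => g * u * z) (g * 1 * z) t :=
        ((hasDerivAt_id t).const_mul g).mul_const z
      have hc1 : HasDerivAt (fun u : ℝ => u ^ 3) (3 * t ^ 2) t := by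
        simpa using hasDerivAt_pow 3 t
      have hcube : HasDerivAt (fun u : ℝ => g ^ 2 * u ^ 3 / 6) (g ^ 2 * (3 * t ^ 2) / 6) t :=
        (hc1.const_mul (g ^ 2)).div_const 6
      have htot := (hch.add hlin).sub hcube
      have h5 := htot.deriv
      have e1 : deriv (fun u => (fun p : ℝ × ℝ => Ψ p.1 p.2 (η p.1 p.2)) (u, s)) t
          = pt2 (surfTrace η Ψ) t s := rfl
      have e2 : deriv (fun v => (fun p : ℝ × ℝ => Ψ p.1 p.2 (η p.1 p.2)) (t, v)) s
          = pz2 (surfTrace η Ψ) t s := rfl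
      rw [e1, e2] at h5
      have h6 : pt2 (surfTrace (shiftEta g η) (shiftPsi g Ψ)) t z
          = pt2 (surfTrace η Ψ) t s - g * t * pz2 (surfTrace η Ψ) t s
              + g * 1 * z - g ^ 2 * (3 * t ^ 2) / 6 := h5
      rw [h6]
      ring
    have hG := hDN t z
    have he := hEz t z
    have hM := hMC t z
    rw [ha, hb, he, hG, hM]
    have hX : pz2 η t s * (pz2 (surfTrace η Ψ) t s + g * t)
          + (DNexpr η Ψ t s - g * t * pz2 η t s)
        = pz2 η t s * pz2 (surfTrace η Ψ) t s + DNexpr η Ψ t s := by ring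
    rw [hX]
    linear_combination hD t s
end

section
/- Let η : ℝ → ℝ be C² with η(z) > 0 for all z, and let v : ℝ × ℝ → ℝ be C³. Define on ℝ × (0,1): α(z,y) := (1 + y² η'(z)²)/η(z)², β(z,y) := −2y η'(z)/η(z), γ(z,y) := (y² η(z) η''(z) − 1 − 2y² η'(z)²)/(y η(z)²), and the operator L_η u := α ∂_y² u + ∂_z² u + β ∂_z∂_y u − γ ∂_y u. Suppose L_η v = 0 on ℝ × (0,1). Let 𝔟(z,y) := ∂_y v(z,y)/η(z). Then for every (z,y) ∈ ℝ × (0,1): (L_η 𝔟)(z,y) = ∂_y v(z,y) / (y² η(z)³). -/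
noncomputable section

/-- Partial derivative in the first variable. -/
def Dz (f : ℝ → ℝ → ℝ) : ℝ → ℝ → ℝ := fun z y => deriv (fun w => f w y) z

/-- Partial derivative in the second variable. -/
def Dy (f : ℝ → ℝ → ℝ) : ℝ → ℝ → ℝ := fun z y => deriv (fun w => f z w) y

end

noncomputable def Dp1 (F : ℝ × ℝ → ℝ) : ℝ × ℝ → ℝ := fun p => fderiv ℝ F p (1, 0)
noncomputable def Dp2 (F : ℝ × ℝ → ℝ) : ℝ × ℝ → ℝ := fun p => fderiv ℝ F p (0, 1)

lemma contDiff_fderiv_apply {F : ℝ × ℝ → ℝ} {n m : WithTop ℕ∞} (hF : ContDiff ℝ n F)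
    (h : m + 1 ≤ n) (w : ℝ × ℝ) : ContDiff ℝ m (fun p => fderiv ℝ F p w) :=
  (ContinuousLinearMap.apply ℝ ℝ w).contDiff.comp (hF.fderiv_right h)

lemma hasDerivAt_fst {G : ℝ × ℝ → ℝ} {z y : ℝ} (hG : DifferentiableAt ℝ G (z, y)) :
    HasDerivAt (fun w => G (w, y)) (Dp1 G (z, y)) z := by
  have h : HasDerivAt (fun w : ℝ => ((w, y) : ℝ × ℝ)) (1, 0) z :=
    (hasDerivAt_id z).prodMk (hasDerivAt_const z y)
  exact hG.hasFDerivAt.comp_hasDerivAt z h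

lemma hasDerivAt_snd {G : ℝ × ℝ → ℝ} {z y : ℝ} (hG : DifferentiableAt ℝ G (z, y)) :
    HasDerivAt (fun u => G (z, u)) (Dp2 G (z, y)) y := by
  have h : HasDerivAt (fun u : ℝ => ((z, u) : ℝ × ℝ)) (0, 1) y :=
    (hasDerivAt_const y z).prodMk (hasDerivAt_id y)
  exact hG.hasFDerivAt.comp_hasDerivAt y h

lemma Dz_eq {G : ℝ × ℝ → ℝ} (hG : Differentiable ℝ G) :
    Dz (fun a b => G (a, b)) = fun z y => Dp1 G (z, y) := by
  funext z y; exact (hasDerivAt_fst (hG (z, y))).deriv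

lemma Dy_eq {G : ℝ × ℝ → ℝ} (hG : Differentiable ℝ G) :
    Dy (fun a b => G (a, b)) = fun z y => Dp2 G (z, y) := by
  funext z y; exact (hasDerivAt_snd (hG (z, y))).deriv

lemma swapD {F : ℝ × ℝ → ℝ} (hF : ContDiff ℝ 2 F) : Dp1 (Dp2 F) = Dp2 (Dp1 F) := by
  have hd : Differentiable ℝ (fderiv ℝ F) :=
    (hF.fderiv_right (m := 1) (by norm_num)).differentiable (by norm_num)
  funext p
  have key : ∀ w u : ℝ × ℝ, fderiv ℝ (fun q => fderiv ℝ F q w) p u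
      = fderiv ℝ (fderiv ℝ F) p u w := by
    intro w u
    have h := ((ContinuousLinearMap.apply ℝ ℝ w).hasFDerivAt.comp p (hd p).hasFDerivAt).fderiv
    have e : (fun q => fderiv ℝ F q w) = (ContinuousLinearMap.apply ℝ ℝ w) ∘ (fderiv ℝ F) := rfl
    rw [e, h]; rfl
  have hsymm := second_derivative_symmetric (f' := fderiv ℝ F)
    (fun q => ((hF.differentiable (by norm_num)) q).hasFDerivAt) (hd p).hasFDerivAt
  show fderiv ℝ (fun q => fderiv ℝ F q (0,1)) p (1,0) = fderiv ℝ (fun q => fderiv ℝ F q (1,0)) p (0,1)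
  rw [key, key, hsymm]


set_option maxHeartbeats 2000000 in
theorem stmt_9 (η : ℝ → ℝ) (hη : ContDiff ℝ 2 η) (hηpos : ∀ z, 0 < η z)
    (v : ℝ → ℝ → ℝ) (hv : ContDiff ℝ 3 (fun p : ℝ × ℝ => v p.1 p.2)) :
    let α : ℝ → ℝ → ℝ := fun z y => (1 + y ^ 2 * deriv η z ^ 2) / η z ^ 2
    let β : ℝ → ℝ → ℝ := fun z y => -(2 * y * deriv η z) / η z
    let γ : ℝ → ℝ → ℝ := fun z y =>
      (y ^ 2 * η z * deriv (deriv η) z - 1 - 2 * y ^ 2 * deriv η z ^ 2) / (y * η z ^ 2)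
    let Lη : (ℝ → ℝ → ℝ) → ℝ → ℝ → ℝ := fun u z y =>
      α z y * Dy (Dy u) z y + Dz (Dz u) z y + β z y * Dz (Dy u) z y - γ z y * Dy u z y
    let 𝔟 : ℝ → ℝ → ℝ := fun z y => Dy v z y / η z
    (∀ z y, 0 < y → y < 1 → Lη v z y = 0) →
    ∀ z y, 0 < y → y < 1 → Lη 𝔟 z y = Dy v z y / (y ^ 2 * η z ^ 3) := by
  intro α β γ Lη 𝔟 hL z y hy0 hy1
  set F : ℝ × ℝ → ℝ := fun p : ℝ × ℝ => v p.1 p.2 with hFdef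
  have hF : ContDiff ℝ 3 F := hv
  have hdF : Differentiable ℝ F := hF.differentiable (by norm_num)
  have hF1 : ContDiff ℝ 2 (Dp1 F) := contDiff_fderiv_apply hF (by norm_num) (1, 0)
  have hF2 : ContDiff ℝ 2 (Dp2 F) := contDiff_fderiv_apply hF (by norm_num) (0, 1)
  have hF11 : ContDiff ℝ 1 (Dp1 (Dp1 F)) := contDiff_fderiv_apply hF1 (by norm_num) (1, 0)
  have hF12 : ContDiff ℝ 1 (Dp1 (Dp2 F)) := contDiff_fderiv_apply hF2 (by norm_num) (1, 0)
  have hF22 : ContDiff ℝ 1 (Dp2 (Dp2 F)) := contDiff_fderiv_apply hF2 (by norm_num) (0, 1)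
  have hdF1 : Differentiable ℝ (Dp1 F) := hF1.differentiable (by norm_num)
  have hdF2 : Differentiable ℝ (Dp2 F) := hF2.differentiable (by norm_num)
  have hd11 : Differentiable ℝ (Dp1 (Dp1 F)) := hF11.differentiable (by norm_num)
  have hd12 : Differentiable ℝ (Dp1 (Dp2 F)) := hF12.differentiable (by norm_num)
  have hd22 : Differentiable ℝ (Dp2 (Dp2 F)) := hF22.differentiable (by norm_num)
  have hdη : Differentiable ℝ η := hη.differentiable (by norm_num)
  have hηd : ∀ a : ℝ, HasDerivAt η (deriv η a) a := fun a => (hdη a).hasDerivAt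
  have hdη' : Differentiable ℝ (deriv η) := by
    have h : ContDiff ℝ 1 (fun x => fderiv ℝ η x 1) :=
      (ContinuousLinearMap.apply ℝ ℝ (1 : ℝ)).contDiff.comp (hη.fderiv_right (by norm_num))
    exact h.differentiable (by norm_num)
  have hη'd : HasDerivAt (deriv η) (deriv (deriv η) z) z := (hdη' z).hasDerivAt
  have hcne : η z ≠ 0 := (hηpos z).ne'
  have hyne : y ≠ 0 := hy0.ne'
  -- swap lemmas
  have sw1 : Dp1 (Dp2 F) = Dp2 (Dp1 F) := swapD (hF.of_le (by norm_num))
  have sw2 : Dp1 (Dp2 (Dp2 F)) = Dp2 (Dp1 (Dp2 F)) := swapD hF2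
  have sw3 : Dp1 (Dp2 (Dp1 F)) = Dp2 (Dp1 (Dp1 F)) := swapD hF1
  have hswA : Dp2 (Dp1 (Dp1 F)) = Dp1 (Dp1 (Dp2 F)) := sw3.symm.trans (congrArg Dp1 sw1.symm)
  have hswB : Dp2 (Dp1 (Dp2 F)) = Dp1 (Dp2 (Dp2 F)) := sw2.symm
  -- curried conversions
  have g1 : Dz v = fun a b => Dp1 F (a, b) := Dz_eq hdF
  have g2 : Dy v = fun a b => Dp2 F (a, b) := Dy_eq hdF
  have g11 : Dz (fun a b => Dp1 F (a, b)) = fun a b => Dp1 (Dp1 F) (a, b) := Dz_eq hdF1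
  have g12 : Dz (fun a b => Dp2 F (a, b)) = fun a b => Dp1 (Dp2 F) (a, b) := Dz_eq hdF2
  have g22 : Dy (fun a b => Dp2 F (a, b)) = fun a b => Dp2 (Dp2 F) (a, b) := Dy_eq hdF2
  simp only [Lη, α, β, γ, 𝔟] at hL ⊢
  simp only [g1, g2, g11, g12, g22] at hL ⊢
  -- first-order derivatives of 𝔟
  have hbY : Dy (fun a b => Dp2 F (a, b) / η a) = fun a b => Dp2 (Dp2 F) (a, b) / η a := by
    funext a b
    exact ((hasDerivAt_snd (hdF2 (a, b))).div_const (η a)).deriv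
  have hbZ : Dz (fun a b => Dp2 F (a, b) / η a)
      = fun a b => (Dp1 (Dp2 F) (a, b) * η a - Dp2 F (a, b) * deriv η a) / η a ^ 2 := by
    funext a b
    exact ((hasDerivAt_fst (hdF2 (a, b))).div (hηd a) (hηpos a).ne').deriv
  simp only [hbY, hbZ]
  -- second-order derivatives of 𝔟 at the point
  have h1 : Dy (fun a b => Dp2 (Dp2 F) (a, b) / η a) z y = Dp2 (Dp2 (Dp2 F)) (z, y) / η z :=
    ((hasDerivAt_snd (hd22 (z, y))).div_const (η z)).deriv
  have h2 : Dz (fun a b => Dp2 (Dp2 F) (a, b) / η a) z y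
      = Dp1 (Dp2 (Dp2 F)) (z, y) / η z - deriv η z * Dp2 (Dp2 F) (z, y) / η z ^ 2 := by
    have hraw : Dz (fun a b => Dp2 (Dp2 F) (a, b) / η a) z y = _ :=
      ((hasDerivAt_fst (hd22 (z, y))).div (hηd z) hcne).deriv
    rw [hraw]; field_simp
  have h3 : Dz (fun a b => (Dp1 (Dp2 F) (a, b) * η a - Dp2 F (a, b) * deriv η a) / η a ^ 2) z y
      = Dp1 (Dp1 (Dp2 F)) (z, y) / η z - 2 * deriv η z * Dp1 (Dp2 F) (z, y) / η z ^ 2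
        - deriv (deriv η) z * Dp2 F (z, y) / η z ^ 2
        + 2 * deriv η z ^ 2 * Dp2 F (z, y) / η z ^ 3 := by
    have hraw : Dz (fun a b => (Dp1 (Dp2 F) (a, b) * η a - Dp2 F (a, b) * deriv η a) / η a ^ 2) z y = _ :=
      ((((hasDerivAt_fst (hd12 (z, y))).mul (hηd z)).sub
          ((hasDerivAt_fst (hdF2 (z, y))).mul hη'd)).div
        ((hηd z).pow 2) (pow_ne_zero 2 hcne)).deriv
    rw [hraw]; simp only [Pi.mul_apply, Pi.sub_apply, Pi.pow_apply, Pi.div_apply, Pi.neg_apply]; field_simp; ring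
  rw [h1, h2, h3]
  -- differentiate the PDE in y
  have hzero : deriv (fun u => (1 + u ^ 2 * deriv η z ^ 2) / η z ^ 2 * Dp2 (Dp2 F) (z, u)
      + Dp1 (Dp1 F) (z, u) + -(2 * u * deriv η z) / η z * Dp1 (Dp2 F) (z, u)
      - (u ^ 2 * η z * deriv (deriv η) z - 1 - 2 * u ^ 2 * deriv η z ^ 2) / (u * η z ^ 2)
        * Dp2 F (z, u)) y = 0 := by
    have hev : (fun u => (1 + u ^ 2 * deriv η z ^ 2) / η z ^ 2 * Dp2 (Dp2 F) (z, u)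
        + Dp1 (Dp1 F) (z, u) + -(2 * u * deriv η z) / η z * Dp1 (Dp2 F) (z, u)
        - (u ^ 2 * η z * deriv (deriv η) z - 1 - 2 * u ^ 2 * deriv η z ^ 2) / (u * η z ^ 2)
          * Dp2 F (z, u)) =ᶠ[nhds y] (fun _ => (0:ℝ)) := by
      filter_upwards [Ioo_mem_nhds hy0 hy1] with u hu
      exact hL z u hu.1 hu.2
    rw [hev.deriv_eq, deriv_const]
  have hq1 : deriv (fun u => (1 + u ^ 2 * deriv η z ^ 2) / η z ^ 2 * Dp2 (Dp2 F) (z, u)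
      + Dp1 (Dp1 F) (z, u) + -(2 * u * deriv η z) / η z * Dp1 (Dp2 F) (z, u)
      - (u ^ 2 * η z * deriv (deriv η) z - 1 - 2 * u ^ 2 * deriv η z ^ 2) / (u * η z ^ 2)
        * Dp2 F (z, u)) y = _ :=
    (((((((hasDerivAt_pow 2 y).mul_const (deriv η z ^ 2)).const_add 1).div_const
          (η z ^ 2)).mul (hasDerivAt_snd (hd22 (z, y)))).add
        (hasDerivAt_snd (hd11 (z, y)))).add
      (((((hasDerivAt_id' y).const_mul 2).mul_const (deriv η z)).neg.div_const
          (η z)).mul (hasDerivAt_snd (hd12 (z, y)))) |>.sub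
      ((((((hasDerivAt_pow 2 y).mul_const (η z)).mul_const (deriv (deriv η) z)).sub_const 1).sub
          (((hasDerivAt_pow 2 y).const_mul 2).mul_const (deriv η z ^ 2))).div
        ((hasDerivAt_id' y).mul_const (η z ^ 2))
        (mul_ne_zero hyne (pow_ne_zero 2 hcne)) |>.mul
        (hasDerivAt_snd (hdF2 (z, y))))).deriv
  have hclean : deriv (fun u => (1 + u ^ 2 * deriv η z ^ 2) / η z ^ 2 * Dp2 (Dp2 F) (z, u)
      + Dp1 (Dp1 F) (z, u) + -(2 * u * deriv η z) / η z * Dp1 (Dp2 F) (z, u)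
      - (u ^ 2 * η z * deriv (deriv η) z - 1 - 2 * u ^ 2 * deriv η z ^ 2) / (u * η z ^ 2)
        * Dp2 F (z, u)) y
      = 2 * y * deriv η z ^ 2 / η z ^ 2 * Dp2 (Dp2 F) (z, y)
        + (1 + y ^ 2 * deriv η z ^ 2) / η z ^ 2 * Dp2 (Dp2 (Dp2 F)) (z, y)
        + Dp1 (Dp1 (Dp2 F)) (z, y)
        + (-(2 * deriv η z) / η z) * Dp1 (Dp2 F) (z, y)
        + (-(2 * y * deriv η z) / η z) * Dp1 (Dp2 (Dp2 F)) (z, y)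
        - ((deriv (deriv η) z / η z + 1 / (y ^ 2 * η z ^ 2) - 2 * deriv η z ^ 2 / η z ^ 2)
            * Dp2 F (z, y)
          + (y ^ 2 * η z * deriv (deriv η) z - 1 - 2 * y ^ 2 * deriv η z ^ 2) / (y * η z ^ 2)
            * Dp2 (Dp2 F) (z, y)) := by
    rw [hq1, congrFun hswA (z, y), congrFun hswB (z, y)]
    simp only [Pi.mul_apply, Pi.sub_apply, Pi.pow_apply, Pi.div_apply, Pi.neg_apply]
    field_simp
    ring
  have hstar := hclean.symm.trans hzero
  linear_combination (1 / η z) * hstar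
end

section
/- Let η : ℝ → ℝ be C² with η(z) > 0 for all z, and let v : ℝ × ℝ → ℝ be C². Define α(z,y) := (1 + y² η'(z)²)/η(z)², β(z,y) := −2y η'(z)/η(z), γ(z,y) := (y² η(z) η''(z) − 1 − 2y² η'(z)²)/(y η(z)²). Let 𝔟(z,y) := ∂_y v(z,y)/η(z), ρ(z,y) := y η(z), and ω(z,y) := ∂_z v(z,y) − 𝔟(z,y) ∂_zρ(z,y) = ∂_z v − y η' 𝔟. If at a point (z,y) ∈ ℝ × (0,1) one has α ∂_y² v + ∂_z² v + β ∂_z∂_y v − γ ∂_y v = 0, then at that point η α ∂_y𝔟 + ∂_zω − ∂_zρ · ∂_z𝔟 + 𝔟/ρ = 0. -/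
theorem stmt_10 (η : ℝ → ℝ) (hη : ContDiff ℝ 2 η) (hηpos : ∀ z', 0 < η z')
    (v : ℝ → ℝ → ℝ) (hv : ContDiff ℝ 2 (fun p : ℝ × ℝ => v p.1 p.2))
    (z y : ℝ) (hy0 : 0 < y) (hy1 : y < 1) :
    let α : ℝ → ℝ → ℝ := fun z' y' => (1 + y' ^ 2 * deriv η z' ^ 2) / η z' ^ 2
    let β : ℝ → ℝ → ℝ := fun z' y' => -(2 * y' * deriv η z') / η z'
    let γ : ℝ → ℝ → ℝ := fun z' y' =>
      (y' ^ 2 * η z' * deriv (deriv η) z' - 1 - 2 * y' ^ 2 * deriv η z' ^ 2)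
        / (y' * η z' ^ 2)
    let 𝔟 : ℝ → ℝ → ℝ := fun z' y' => Dy v z' y' / η z'
    let ρ : ℝ → ℝ → ℝ := fun z' y' => y' * η z'
    let ω : ℝ → ℝ → ℝ := fun z' y' => Dz v z' y' - 𝔟 z' y' * Dz ρ z' y'
    α z y * Dy (Dy v) z y + Dz (Dz v) z y + β z y * Dz (Dy v) z y - γ z y * Dy v z y = 0 →
    η z * α z y * Dy 𝔟 z y + Dz ω z y - Dz ρ z y * Dz 𝔟 z y + 𝔟 z y / ρ z y = 0 := by
  intro α β γ 𝔟 ρ ω hpde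
  set F : ℝ × ℝ → ℝ := fun p : ℝ × ℝ => v p.1 p.2 with hF
  set g1 : ℝ × ℝ → ℝ := fun p => fderiv ℝ F p ((1:ℝ), (0:ℝ)) with hg1def
  set g2 : ℝ × ℝ → ℝ := fun p => fderiv ℝ F p ((0:ℝ), (1:ℝ)) with hg2def
  have hg1 : ContDiff ℝ 1 g1 := (hv.fderiv_right (by norm_num)).clm_apply contDiff_const
  have hg2 : ContDiff ℝ 1 g2 := (hv.fderiv_right (by norm_num)).clm_apply contDiff_const
  have hFd : Differentiable ℝ F := hv.differentiable (by norm_num)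
  -- identification of first partial derivatives
  have hDz : ∀ w s, Dz v w s = g1 (w, s) := by
    intro w s
    have h : HasDerivAt (fun w' => v w' s) (fderiv ℝ F (w, s) ((1:ℝ),(0:ℝ))) w :=
      (hFd (w, s)).hasFDerivAt.comp_hasDerivAt (f := fun x => (x, s)) w
        (HasDerivAt.prodMk (hasDerivAt_id' w) (hasDerivAt_const w s))
    exact h.deriv
  have hDy : ∀ w s, Dy v w s = g2 (w, s) := by
    intro w s
    have h : HasDerivAt (fun t => v w t) (fderiv ℝ F (w, s) ((0:ℝ),(1:ℝ))) s :=
      (hFd (w, s)).hasFDerivAt.comp_hasDerivAt (f := fun t => (w, t)) s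
        (HasDerivAt.prodMk (hasDerivAt_const s w) (hasDerivAt_id' s))
    exact h.deriv
  -- derivatives of g1, g2 in the first variable
  have h1 : HasDerivAt (fun w => g1 (w, y)) (fderiv ℝ g1 (z, y) ((1:ℝ),(0:ℝ))) z :=
    ((hg1.differentiable one_ne_zero) (z, y)).hasFDerivAt.comp_hasDerivAt (f := fun x => (x, y)) z
      (HasDerivAt.prodMk (hasDerivAt_id' z) (hasDerivAt_const z y))
  have h2 : HasDerivAt (fun w => g2 (w, y)) (fderiv ℝ g2 (z, y) ((1:ℝ),(0:ℝ))) z :=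
    ((hg2.differentiable one_ne_zero) (z, y)).hasFDerivAt.comp_hasDerivAt (f := fun x => (x, y)) z
      (HasDerivAt.prodMk (hasDerivAt_id' z) (hasDerivAt_const z y))
  -- η derivatives
  have hη1 : ∀ w, HasDerivAt η (deriv η w) w := fun w =>
    ((hη.differentiable (by norm_num)) w).hasDerivAt
  have hηd1 : ContDiff ℝ 1 (deriv η) := by
    have h2' : ContDiff ℝ ((1:ℕ)+1) η := by exact_mod_cast hη
    exact (contDiff_succ_iff_deriv.mp h2').2.2
  have hη2 : ∀ w, HasDerivAt (deriv η) (deriv (deriv η) w) w := fun w =>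
    ((hηd1.differentiable one_ne_zero) w).hasDerivAt
  have hηz := (hηpos z).ne'
  have hyne := hy0.ne'
  -- abbreviations
  set A := Dy (Dy v) z y with hA
  set B := fderiv ℝ g1 (z, y) ((1:ℝ),(0:ℝ)) with hB
  set C := fderiv ℝ g2 (z, y) ((1:ℝ),(0:ℝ)) with hC
  set D := g2 (z, y) with hD
  set E := deriv η z with hE
  set G := η z with hG
  set F2 := deriv (deriv η) z with hF2
  -- second-order z-derivatives
  have eDzDz : Dz (Dz v) z y = B := by
    have : (fun w => Dz v w y) = fun w => g1 (w, y) := funext fun w => hDz w y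
    rw [Dz, this]; exact h1.deriv
  have eDzDy : Dz (Dy v) z y = C := by
    have : (fun w => Dy v w y) = fun w => g2 (w, y) := funext fun w => hDy w y
    rw [Dz, this]; exact h2.deriv
  -- Dz ρ
  have hρd : ∀ w s, HasDerivAt (fun w' => ρ w' s) (s * deriv η w) w := fun w s =>
    (hη1 w).const_mul s
  have eDzρ : ∀ w s, Dz ρ w s = s * deriv η w := fun w s => (hρd w s).deriv
  -- Dz 𝔟
  have h𝔟 : HasDerivAt (fun w => 𝔟 w y) ((C * G - D * E) / G ^ 2) z := by
    have : (fun w => 𝔟 w y) = fun w => g2 (w, y) / η w := funext fun w => by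
      simp only [𝔟, hDy w y]
    rw [this]
    exact h2.div (hη1 z) hηz
  have eDz𝔟 : Dz 𝔟 z y = (C * G - D * E) / G ^ 2 := h𝔟.deriv
  -- Dz ω
  have eDzω : Dz ω z y = B - ((C * G - D * E) / G ^ 2 * (y * E) + D / G * (y * F2)) := by
    have hfun : (fun w => ω w y) = fun w => g1 (w, y) - g2 (w, y) / η w * (y * deriv η w) :=
      funext fun w => by simp only [ω, 𝔟, hDz w y, hDy w y, eDzρ w y]
    have hd : HasDerivAt (fun w => ω w y)
        (B - ((C * G - D * E) / G ^ 2 * (y * E) + D / G * (y * deriv (deriv η) z))) z := by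
      rw [hfun]
      exact h1.sub ((h2.div (hη1 z) hηz).mul ((hη2 z).const_mul y))
    exact hd.deriv
  -- Dy 𝔟
  have eDy𝔟 : Dy 𝔟 z y = A / G := by
    have : (fun s => 𝔟 z s) = fun s => Dy v z s / η z := rfl
    rw [Dy, this, deriv_div_const]; rfl
  have hDvzy : Dy v z y = D := hDy z y
  have hpde' : (1 + y ^ 2 * E ^ 2) / G ^ 2 * A + B + -(2 * y * E) / G * C -
      (y ^ 2 * G * F2 - 1 - 2 * y ^ 2 * E ^ 2) / (y * G ^ 2) * D = 0 := by
    rw [← eDzDz, ← eDzDy, ← hDvzy]; exact hpde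
  show G * ((1 + y ^ 2 * E ^ 2) / G ^ 2) * Dy 𝔟 z y + Dz ω z y - Dz ρ z y * Dz 𝔟 z y
      + 𝔟 z y / (y * G) = 0
  rw [eDy𝔟, eDzω, eDz𝔟, eDzρ z y]
  have e𝔟 : 𝔟 z y = D / G := by simp only [𝔟, hDvzy]; rfl
  rw [e𝔟]
  field_simp at hpde' ⊢
  linear_combination hpde'
end

section
/- Let η : ℝ → ℝ be C² with η(z) > 0 for all z, and let Ψ : ℝ × ℝ → ℝ (variables (z,r)) be C². Define v(z,y) := Ψ(z, y·η(z)) and the matrix field A(z,y) := [[y η(z)², −y² η(z) η'(z)], [−y² η(z) η'(z), y(1 + y² η'(z)²)]], and write div(A∇v) := ∂_z(A₁₁ ∂_z v + A₁₂ ∂_y v) + ∂_y(A₂₁ ∂_z v + A₂₂ ∂_y v). Then for every (z,y) ∈ ℝ × ℝ: div(A∇v)(z,y) = η(z) · [ ∂_z(r ∂_zΨ) + ∂_r(r ∂_rΨ) ](z, y·η(z)), where ∂_z(r∂_zΨ) + ∂_r(r∂_rΨ) = r(∂_z²Ψ + ∂_r²Ψ) + ∂_rΨ. In particular, if ∂_z(r∂_zΨ)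 + ∂_r(r∂_rΨ) = 0 on the jet domain {(z,r) : 0 < r ≤ η(z)}, then div(A∇v) = 0 on ℝ × (0,1]. -/
lemma expand_clm {M : Type*} [NormedAddCommGroup M] [NormedSpace ℝ M]
    (L : ℝ × ℝ →L[ℝ] M) (a b : ℝ) : L (a, b) = a • L (1, 0) + b • L (0, 1) := by
  have h : (a, b) = a • ((1:ℝ), (0:ℝ)) + b • ((0:ℝ), (1:ℝ)) := by
    simp [Prod.ext_iff]
  rw [h, map_add, map_smul, map_smul]

lemma expand_clm2 (B : ℝ × ℝ →L[ℝ] ℝ × ℝ →L[ℝ] ℝ) (a b : ℝ) (e : ℝ × ℝ) :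
    B (a, b) e = a * B (1, 0) e + b * B (0, 1) e := by
  rw [show ((a, b) : ℝ × ℝ) = a • ((1:ℝ), (0:ℝ)) + b • ((0:ℝ), (1:ℝ)) by simp [Prod.ext_iff],
    map_add, map_smul, map_smul]
  simp [ContinuousLinearMap.add_apply, ContinuousLinearMap.smul_apply, smul_eq_mul]

theorem stmt_12 (η : ℝ → ℝ) (hη : ContDiff ℝ 2 η) (hηpos : ∀ z, 0 < η z)
    (Ψ : ℝ → ℝ → ℝ) (hΨ : ContDiff ℝ 2 (fun p : ℝ × ℝ => Ψ p.1 p.2)) :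
    let v : ℝ → ℝ → ℝ := fun z y => Ψ z (y * η z)
    let A11 : ℝ → ℝ → ℝ := fun z y => y * η z ^ 2
    let A12 : ℝ → ℝ → ℝ := fun z y => -(y ^ 2) * η z * deriv η z
    let A22 : ℝ → ℝ → ℝ := fun z y => y * (1 + y ^ 2 * deriv η z ^ 2)
    let divA : (ℝ → ℝ → ℝ) → ℝ → ℝ → ℝ := fun u z y =>
      Dz (fun z' y' => A11 z' y' * Dz u z' y' + A12 z' y' * Dy u z' y') z y
        + Dy (fun z' y' => A12 z' y' * Dz u z' y' + A22 z' y' * Dy u z' y') z y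
    let cyl : ℝ → ℝ → ℝ := fun z r =>
      Dz (fun z' r' => r' * Dz Ψ z' r') z r + Dy (fun z' r' => r' * Dy Ψ z' r') z r
    (∀ z y, divA v z y = η z * cyl z (y * η z)) ∧
      (∀ z r, cyl z r = r * (Dz (Dz Ψ) z r + Dy (Dy Ψ) z r) + Dy Ψ z r) ∧
      ((∀ z r, 0 < r → r ≤ η z → cyl z r = 0) →
        ∀ z y, 0 < y → y ≤ 1 → divA v z y = 0) := by
  intro v A11 A12 A22 divA cyl
  have hF : ContDiff ℝ 2 (fun p : ℝ × ℝ => Ψ p.1 p.2) := hΨ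
  set F : ℝ × ℝ → ℝ := fun p => Ψ p.1 p.2 with hFdef
  have hFdiff : Differentiable ℝ F := hF.differentiable (by norm_num)
  have hGc : ContDiff ℝ 1 (fderiv ℝ F) := hF.fderiv_right (by norm_num)
  have hGdiff : Differentiable ℝ (fderiv ℝ F) := hGc.differentiable (by norm_num)
  set G := fderiv ℝ F with hGdef
  set H := fderiv ℝ G with hHdef
  have hηd : Differentiable ℝ η := hη.differentiable (by norm_num)
  -- chain rule for F along a path
  have keyF : ∀ (pth : ℝ → ℝ × ℝ) (d : ℝ × ℝ) (z : ℝ), HasDerivAt pth d z →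
      HasDerivAt (fun w => F (pth w)) (G (pth z) d) z := by
    intro pth d z hp
    exact (hFdiff (pth z)).hasFDerivAt.comp_hasDerivAt z hp
  -- chain rule for G (evaluated at a fixed direction) along a path
  have keyG : ∀ (e : ℝ × ℝ) (pth : ℝ → ℝ × ℝ) (d : ℝ × ℝ) (z : ℝ), HasDerivAt pth d z →
      HasDerivAt (fun w => G (pth w) e) (H (pth z) d e) z := by
    intro e pth d z hp
    have h1 : HasFDerivAt (fun p => G p e)
        ((ContinuousLinearMap.apply ℝ ℝ e).comp (H (pth z))) (pth z) :=
      (ContinuousLinearMap.apply ℝ ℝ e).hasFDerivAt.comp (pth z) (hGdiff (pth z)).hasFDerivAt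
    exact h1.comp_hasDerivAt z hp
  -- first partials of Ψ
  have hDzΨ : ∀ z r, Dz Ψ z r = G (z, r) (1, 0) := by
    intro z r
    exact (keyF (fun w => (w, r)) (1, 0) z
      (HasDerivAt.prodMk (hasDerivAt_id z) (hasDerivAt_const z r))).deriv
  have hDyΨ : ∀ z r, Dy Ψ z r = G (z, r) (0, 1) := by
    intro z r
    exact (keyF (fun w => (z, w)) (0, 1) r
      (HasDerivAt.prodMk (hasDerivAt_const r z) (hasDerivAt_id r))).deriv
  -- paths
  have hpath1 : ∀ z y : ℝ, HasDerivAt (fun w => (w, y * η w)) ((1 : ℝ), y * deriv η z) z := by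
    intro z y
    exact HasDerivAt.prodMk (hasDerivAt_id z) (((hηd z).hasDerivAt).const_mul y)
  have hpath2 : ∀ z y : ℝ, HasDerivAt (fun w => (z, w * η z)) ((0 : ℝ), η z) y := by
    intro z y
    simpa using HasDerivAt.prodMk (hasDerivAt_const y z) ((hasDerivAt_id y).mul_const (η z))
  -- first partials of v
  have hDzv : ∀ z y, Dz v z y
      = G (z, y * η z) (1, 0) + (y * deriv η z) * G (z, y * η z) (0, 1) := by
    intro z y
    have hd : HasDerivAt (fun w => Ψ w (y * η w)) (G (z, y * η z) (1, y * deriv η z)) z :=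
      keyF _ _ z (hpath1 z y)
    have h1 : Dz v z y = G (z, y * η z) (1, y * deriv η z) := hd.deriv
    rw [h1, expand_clm]
    simp [smul_eq_mul]
  have hDyv : ∀ z y, Dy v z y = η z * G (z, y * η z) (0, 1) := by
    intro z y
    have hd : HasDerivAt (fun w => Ψ z (w * η z)) (G (z, y * η z) (0, η z)) y :=
      keyF _ _ y (hpath2 z y)
    have h1 : Dy v z y = G (z, y * η z) (0, η z) := hd.deriv
    rw [h1, expand_clm]
    simp [smul_eq_mul]
  -- main computation of divA v
  have main : ∀ z y, divA v z y
      = η z * (y * η z * (H (z, y * η z) (1, 0) (1, 0) + H (z, y * η z) (0, 1) (0, 1))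
          + G (z, y * η z) (0, 1)) := by
    intro z y
    have L1 : Dz (fun z' y' => A11 z' y' * Dz v z' y' + A12 z' y' * Dy v z' y') z y
        = deriv (fun w => y * η w ^ 2 * G (w, y * η w) (1, 0)) z := by
      show deriv (fun w => A11 w y * Dz v w y + A12 w y * Dy v w y) z = _
      congr 1
      funext w
      show y * η w ^ 2 * Dz v w y + -(y ^ 2) * η w * deriv η w * Dy v w y = _
      rw [hDzv, hDyv]; ring
    have L2 : Dy (fun z' y' => A12 z' y' * Dz v z' y' + A22 z' y' * Dy v z' y') z y
        = deriv (fun w => -(w ^ 2) * η z * deriv η z * G (z, w * η z) (1, 0)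
            + w * η z * G (z, w * η z) (0, 1)) y := by
      show deriv (fun w => A12 z w * Dz v z w + A22 z w * Dy v z w) y = _
      congr 1
      funext w
      show -(w ^ 2) * η z * deriv η z * Dz v z w
          + w * (1 + w ^ 2 * deriv η z ^ 2) * Dy v z w = _
      rw [hDzv, hDyv]; ring
    -- derivative of the first simplified term
    have ha : HasDerivAt (fun w => y * η w ^ 2) (y * (2 * η z * deriv η z)) z := by
      have := ((hηd z).hasDerivAt.pow 2).const_mul y
      simpa [pow_one, mul_assoc, mul_comm, mul_left_comm] using this
    have hb : HasDerivAt (fun w => G (w, y * η w) (1, 0))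
        (H (z, y * η z) (1, y * deriv η z) (1, 0)) z := keyG (1, 0) _ _ z (hpath1 z y)
    have d1 : deriv (fun w => y * η w ^ 2 * G (w, y * η w) (1, 0)) z = _ := (ha.mul hb).deriv
    -- derivative of the second simplified term
    have ha2 : HasDerivAt (fun w => -(w ^ 2) * η z * deriv η z)
        (-(2 * y) * η z * deriv η z) y := by
      have := (((hasDerivAt_pow 2 y).neg).mul_const (η z)).mul_const (deriv η z)
      simpa [pow_one, mul_assoc, mul_comm, mul_left_comm] using this
    have hc : HasDerivAt (fun w => G (z, w * η z) (1, 0))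
        (H (z, y * η z) (0, η z) (1, 0)) y := keyG (1, 0) _ _ y (hpath2 z y)
    have hb2 : HasDerivAt (fun w => w * η z) (η z) y := by
      simpa using (hasDerivAt_id y).mul_const (η z)
    have hc2 : HasDerivAt (fun w => G (z, w * η z) (0, 1))
        (H (z, y * η z) (0, η z) (0, 1)) y := keyG (0, 1) _ _ y (hpath2 z y)
    have d2 : deriv (fun w => -(w ^ 2) * η z * deriv η z * G (z, w * η z) (1, 0)
        + w * η z * G (z, w * η z) (0, 1)) y = _ := ((ha2.mul hc).add (hb2.mul hc2)).deriv
    have ediv : divA v z y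
        = deriv (fun w => y * η w ^ 2 * G (w, y * η w) (1, 0)) z
          + deriv (fun w => -(w ^ 2) * η z * deriv η z * G (z, w * η z) (1, 0)
              + w * η z * G (z, w * η z) (0, 1)) y := by
      show Dz (fun z' y' => A11 z' y' * Dz v z' y' + A12 z' y' * Dy v z' y') z y
          + Dy (fun z' y' => A12 z' y' * Dz v z' y' + A22 z' y' * Dy v z' y') z y = _
      rw [L1, L2]
    rw [ediv, d1, d2]
    -- expand the bilinear terms
    have e1 : H (z, y * η z) (1, y * deriv η z) (1, 0)
        = H (z, y * η z) (1, 0) (1, 0) + (y * deriv η z) * H (z, y * η z) (0, 1) (1, 0) := by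
      simpa using expand_clm2 (H (z, y * η z)) 1 (y * deriv η z) (1, 0)
    have e2 : H (z, y * η z) (0, η z) (1, 0) = η z * H (z, y * η z) (0, 1) (1, 0) := by
      simpa using expand_clm2 (H (z, y * η z)) 0 (η z) (1, 0)
    have e3 : H (z, y * η z) (0, η z) (0, 1) = η z * H (z, y * η z) (0, 1) (0, 1) := by
      simpa using expand_clm2 (H (z, y * η z)) 0 (η z) (0, 1)
    rw [e1, e2, e3]
    ring
  -- computation of cyl
  have cylEq : ∀ z r, cyl z r
      = r * (H (z, r) (1, 0) (1, 0) + H (z, r) (0, 1) (0, 1)) + G (z, r) (0, 1) := by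
    intro z r
    have p1 : Dz (fun z' r' => r' * Dz Ψ z' r') z r = r * H (z, r) (1, 0) (1, 0) := by
      show deriv (fun w => r * Dz Ψ w r) z = _
      have hfun : (fun w => r * Dz Ψ w r) = fun w => r * G (w, r) (1, 0) :=
        funext fun w => by rw [hDzΨ]
      rw [hfun]
      exact ((keyG (1, 0) (fun w => (w, r)) (1, 0) z
        (HasDerivAt.prodMk (hasDerivAt_id z) (hasDerivAt_const z r))).const_mul r).deriv
    have p2 : Dy (fun z' r' => r' * Dy Ψ z' r') z r
        = G (z, r) (0, 1) + r * H (z, r) (0, 1) (0, 1) := by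
      show deriv (fun w => w * Dy Ψ z w) r = _
      have hfun : (fun w => w * Dy Ψ z w) = fun w => w * G (z, w) (0, 1) :=
        funext fun w => by rw [hDyΨ]
      rw [hfun]
      have := (hasDerivAt_id r).mul (keyG (0, 1) (fun w => (z, w)) (0, 1) r
        (HasDerivAt.prodMk (hasDerivAt_const r z) (hasDerivAt_id r)))
      have h' : deriv (fun w => w * G (z, w) (0, 1)) r = _ := this.deriv
      simpa using h'
    show Dz (fun z' r' => r' * Dz Ψ z' r') z r + Dy (fun z' r' => r' * Dy Ψ z' r') z r = _
    rw [p1, p2]; ring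
  -- second partials as entries of H
  have hDzDz : ∀ z r, Dz (Dz Ψ) z r = H (z, r) (1, 0) (1, 0) := by
    intro z r
    have hfun : (fun w => Dz Ψ w r) = fun w => G (w, r) (1, 0) := funext fun w => hDzΨ w r
    show deriv (fun w => Dz Ψ w r) z = _
    rw [hfun]
    exact (keyG (1, 0) (fun w => (w, r)) (1, 0) z
      (HasDerivAt.prodMk (hasDerivAt_id z) (hasDerivAt_const z r))).deriv
  have hDyDy : ∀ z r, Dy (Dy Ψ) z r = H (z, r) (0, 1) (0, 1) := by
    intro z r
    have hfun : (fun w => Dy Ψ z w) = fun w => G (z, w) (0, 1) := funext fun w => hDyΨ z w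
    show deriv (fun w => Dy Ψ z w) r = _
    rw [hfun]
    exact (keyG (0, 1) (fun w => (z, w)) (0, 1) r
      (HasDerivAt.prodMk (hasDerivAt_const r z) (hasDerivAt_id r))).deriv
  have bullet1 : ∀ z y, divA v z y = η z * cyl z (y * η z) := by
    intro z y
    rw [main, cylEq]
  refine ⟨bullet1, ?_, ?_⟩
  · intro z r
    rw [cylEq, hDzDz, hDyDy, hDyΨ]
  · intro h0 z y hy hy1
    rw [bullet1, h0 z (y * η z) (mul_pos hy (hηpos z))
      (by nlinarith [hηpos z]), mul_zero]
end

section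
/- Let η : ℝ × ℝ → ℝ (variables (t,z)) be C¹, Ψ : ℝ × ℝ × ℝ → ℝ (variables (t,z,r)) be C¹, and P : ℝ × ℝ → ℝ. Define ψ(t,z) := Ψ(t,z,η(t,z)) and G(t,z) := ∂_rΨ(t,z,η(t,z)) − ∂_zη(t,z)·∂_zΨ(t,z,η(t,z)). Fix (t,z) and suppose the kinematic condition ∂_tη(t,z) = G(t,z) and the Bernoulli condition ∂_tΨ(t,z,η(t,z)) + ½( ∂_zΨ(t,z,η(t,z))² + ∂_rΨ(t,z,η(t,z))² ) + P(t,z) = 0 hold. Then: (i) ∂_rΨ(t,z,η(t,z)) = (∂_zη·∂_zψ + G)(t,z) / (1 + ∂_zη(t,z)²) and ∂_zΨ(t,z,η(t,z)) = (∂_zψ − ∂_zη·G)(t,z) / (1 + ∂_zη(t,z)²); and (ii) ∂_tψ(t,z) + ½ ∂_zψ(t,z)² − (∂_zη·∂_zψ + G)(t,z)² / (2(1 + ∂_zη(t,z)²)) + P(t,z) = 0. -/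
noncomputable section

/-- Partial derivative in the first variable of a function of three real variables. -/
def pt3 (f : ℝ → ℝ → ℝ → ℝ) (t z r : ℝ) : ℝ := deriv (fun s => f s z r) t

end

theorem stmt_15 (η : ℝ → ℝ → ℝ) (Ψ : ℝ → ℝ → ℝ → ℝ) (P : ℝ → ℝ → ℝ)
    (hη : ContDiff ℝ 1 (fun p : ℝ × ℝ => η p.1 p.2))
    (hΨ : ContDiff ℝ 1 (fun p : ℝ × ℝ × ℝ => Ψ p.1 p.2.1 p.2.2))
    (t z : ℝ) :
    let ψ : ℝ → ℝ → ℝ := fun t' z' => Ψ t' z' (η t' z')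
    let G : ℝ → ℝ → ℝ := fun t' z' =>
      pr3 Ψ t' z' (η t' z') - pz2 η t' z' * pz3 Ψ t' z' (η t' z')
    pt2 η t z = G t z →
    pt3 Ψ t z (η t z) + (pz3 Ψ t z (η t z) ^ 2 + pr3 Ψ t z (η t z) ^ 2) / 2 + P t z = 0 →
    (pr3 Ψ t z (η t z) = (pz2 η t z * pz2 ψ t z + G t z) / (1 + pz2 η t z ^ 2) ∧
        pz3 Ψ t z (η t z) = (pz2 ψ t z - pz2 η t z * G t z) / (1 + pz2 η t z ^ 2)) ∧
      pt2 ψ t z + pz2 ψ t z ^ 2 / 2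
          - (pz2 η t z * pz2 ψ t z + G t z) ^ 2 / (2 * (1 + pz2 η t z ^ 2)) + P t z = 0 := by
  intro ψ G hkin hber
  have hFd : DifferentiableAt ℝ (fun p : ℝ × ℝ × ℝ => Ψ p.1 p.2.1 p.2.2) (t, z, η t z) :=
    hΨ.differentiable one_ne_zero _
  have hEd : DifferentiableAt ℝ (fun p : ℝ × ℝ => η p.1 p.2) (t, z) :=
    hη.differentiable one_ne_zero _
  set L := fderiv ℝ (fun p : ℝ × ℝ × ℝ => Ψ p.1 p.2.1 p.2.2) (t, z, η t z) with hL
  set M := fderiv ℝ (fun p : ℝ × ℝ => η p.1 p.2) (t, z) with hM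
  -- partial derivatives of Ψ as directional derivatives
  have h1 : HasDerivAt (fun s => Ψ s z (η t z)) (L ((1:ℝ), (0:ℝ), (0:ℝ))) t := by
    have hc : HasDerivAt (fun s : ℝ => (s, z, η t z)) ((1:ℝ), (0:ℝ), (0:ℝ)) t :=
      HasDerivAt.prodMk (hasDerivAt_id t) (HasDerivAt.prodMk (hasDerivAt_const t z) (hasDerivAt_const t (η t z)))
    exact (hFd.hasFDerivAt.comp_hasDerivAt t hc)
  have h2 : HasDerivAt (fun w => Ψ t w (η t z)) (L ((0:ℝ), (1:ℝ), (0:ℝ))) z := by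
    have hc : HasDerivAt (fun w : ℝ => (t, w, η t z)) ((0:ℝ), (1:ℝ), (0:ℝ)) z :=
      HasDerivAt.prodMk (hasDerivAt_const z t) (HasDerivAt.prodMk (hasDerivAt_id z) (hasDerivAt_const z (η t z)))
    exact (hFd.hasFDerivAt.comp_hasDerivAt z hc)
  have h3 : HasDerivAt (fun w => Ψ t z w) (L ((0:ℝ), (0:ℝ), (1:ℝ))) (η t z) := by
    have hc : HasDerivAt (fun w : ℝ => (t, z, w)) ((0:ℝ), (0:ℝ), (1:ℝ)) (η t z) :=
      HasDerivAt.prodMk (hasDerivAt_const _ t) (HasDerivAt.prodMk (hasDerivAt_const _ z) (hasDerivAt_id _))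
    exact (hFd.hasFDerivAt.comp_hasDerivAt _ hc)
  have hEt : HasDerivAt (fun s => η s z) (M ((1:ℝ), (0:ℝ))) t := by
    have hc : HasDerivAt (fun s : ℝ => (s, z)) ((1:ℝ), (0:ℝ)) t :=
      HasDerivAt.prodMk (hasDerivAt_id t) (hasDerivAt_const t z)
    exact (hEd.hasFDerivAt.comp_hasDerivAt t hc)
  have hEz : HasDerivAt (fun w => η t w) (M ((0:ℝ), (1:ℝ))) z := by
    have hc : HasDerivAt (fun w : ℝ => (t, w)) ((0:ℝ), (1:ℝ)) z :=
      HasDerivAt.prodMk (hasDerivAt_const z t) (hasDerivAt_id z)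
    exact (hEd.hasFDerivAt.comp_hasDerivAt z hc)
  have ept3 : pt3 Ψ t z (η t z) = L ((1:ℝ), (0:ℝ), (0:ℝ)) := h1.deriv
  have epz3 : pz3 Ψ t z (η t z) = L ((0:ℝ), (1:ℝ), (0:ℝ)) := h2.deriv
  have epr3 : pr3 Ψ t z (η t z) = L ((0:ℝ), (0:ℝ), (1:ℝ)) := h3.deriv
  have ept2 : pt2 η t z = M ((1:ℝ), (0:ℝ)) := hEt.deriv
  have epz2 : pz2 η t z = M ((0:ℝ), (1:ℝ)) := hEz.deriv
  -- chain rule for ψ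
  have hdecomp : ∀ m : ℝ, L ((1:ℝ), (0:ℝ), m) = L ((1:ℝ),(0:ℝ),(0:ℝ)) + m * L ((0:ℝ),(0:ℝ),(1:ℝ)) := by
    intro m
    have : ((1:ℝ), (0:ℝ), m) = ((1:ℝ),(0:ℝ),(0:ℝ)) + m • ((0:ℝ),(0:ℝ),(1:ℝ)) := by
      simp [Prod.ext_iff]
    rw [this, map_add, map_smul, smul_eq_mul]
  have hdecomp2 : ∀ m : ℝ, L ((0:ℝ), (1:ℝ), m) = L ((0:ℝ),(1:ℝ),(0:ℝ)) + m * L ((0:ℝ),(0:ℝ),(1:ℝ)) := by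
    intro m
    have : ((0:ℝ), (1:ℝ), m) = ((0:ℝ),(1:ℝ),(0:ℝ)) + m • ((0:ℝ),(0:ℝ),(1:ℝ)) := by
      simp [Prod.ext_iff]
    rw [this, map_add, map_smul, smul_eq_mul]
  have hψt : HasDerivAt (fun s => ψ s z) (L ((1:ℝ), (0:ℝ), M ((1:ℝ),(0:ℝ)))) t := by
    have hc : HasDerivAt (fun s : ℝ => (s, z, η s z)) ((1:ℝ), (0:ℝ), M ((1:ℝ),(0:ℝ))) t :=
      HasDerivAt.prodMk (hasDerivAt_id t) (HasDerivAt.prodMk (hasDerivAt_const t z) hEt)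
    exact (hFd.hasFDerivAt.comp_hasDerivAt t hc)
  have hψz : HasDerivAt (fun w => ψ t w) (L ((0:ℝ), (1:ℝ), M ((0:ℝ),(1:ℝ)))) z := by
    have hc : HasDerivAt (fun w : ℝ => (t, w, η t w)) ((0:ℝ), (1:ℝ), M ((0:ℝ),(1:ℝ))) z :=
      HasDerivAt.prodMk (hasDerivAt_const z t) (HasDerivAt.prodMk (hasDerivAt_id z) hEz)
    exact (hFd.hasFDerivAt.comp_hasDerivAt z hc)
  have eψt : pt2 ψ t z = pt3 Ψ t z (η t z) + pt2 η t z * pr3 Ψ t z (η t z) := by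
    rw [ept3, epr3, ept2]
    rw [show pt2 ψ t z = L ((1:ℝ), (0:ℝ), M ((1:ℝ),(0:ℝ))) from hψt.deriv]
    exact hdecomp _
  have eψz : pz2 ψ t z = pz3 Ψ t z (η t z) + pz2 η t z * pr3 Ψ t z (η t z) := by
    rw [epz3, epr3, epz2]
    rw [show pz2 ψ t z = L ((0:ℝ), (1:ℝ), M ((0:ℝ),(1:ℝ))) from hψz.deriv]
    exact hdecomp2 _
  -- now algebra
  set a := pz3 Ψ t z (η t z)
  set b := pr3 Ψ t z (η t z)
  set c := pt3 Ψ t z (η t z)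
  set e := pz2 η t z
  have hGval : G t z = b - e * a := rfl
  have hne : (1 : ℝ) + e ^ 2 ≠ 0 := by positivity
  refine ⟨⟨?_, ?_⟩, ?_⟩
  · rw [hGval, eψz]; field_simp; ring
  · rw [hGval, eψz]; field_simp; ring
  · rw [hGval, eψz, eψt, hkin, hGval]
    field_simp
    nlinarith [hber, sq_nonneg e]
end
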